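/- In the free group F(b,c), consider the set S of words {b·c⁻¹} ∪ {c, b·c, b} ∪ {c⁻¹, b⁻¹, c⁻¹·b⁻¹} ∪ {c·b⁻¹} ∪ {1, b} ∪ {1, c⁻¹} ∪ {c⁻¹·b} ∪ {1, c} ∪ {c, b, c·b} ∪ {1, b⁻¹} ∪ {b⁻¹·c} ∪ {c⁻¹, b⁻¹·c⁻¹, b⁻¹}. Label each word with a start state and end state from {A₁', A₁'', A₂', A₂''} according to Table 5 of the paper. If w₁, …, wₚ is a sequence of labeled words such that the end state of wᵢ matches the start state of wᵢ₊₁ (switching primes: A₁' ↔ A₁'', A₂' ↔ A₂''), the sequence starts with the word b·c⁻¹ (from A₁' to A₂'), and the sequence is cyclic, then the product w₁w₂⋯wₚ in F(b,c) has reduced length at least 2; in particular it is not the identity. -/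

import Mathlib

/-!
Give each letter of a word in `F(b, c)` its sign (`true` for `b, c`, `false` for `b⁻¹, c⁻¹`).
Every nontrivial word of Table 5 from `t` to `u` begins with a letter of sign `t.sign` and ends
with a letter of sign `!u.sign = u.swap.sign`, and a trivial one occurs only when
`t.sign = !u.sign`. Hence along an admissible sequence the running product always ends with a
letter of the sign with which the next word begins: nothing ever cancels, and the reduced word
of the product begins with the two letters of `b c⁻¹`.
-/

/-- The four states `A₁', A₁'', A₂', A₂''` of Table 5. -/
inductive ArcState : Type
  | A1' : ArcState
  | A1'' : ArcState
  | A2' : ArcState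
  | A2'' : ArcState
deriving DecidableEq

/-- Switching primes: `A₁' ↔ A₁''` and `A₂' ↔ A₂''`. -/
def ArcState.swap : ArcState → ArcState
  | .A1' => .A1''
  | .A1'' => .A1'
  | .A2' => .A2''
  | .A2'' => .A2'

/-- The generator `b` of the free group on two generators. -/
def genB : FreeGroup (Fin 2) := FreeGroup.of 0

/-- The generator `c` of the free group on two generators. -/
def genC : FreeGroup (Fin 2) := FreeGroup.of 1

/-- Table 5 of the paper: the words in `F(b, c)` described by the `AA`,
`ABA` and `ACA` arcs traced from a start state to an end state. -/
def TableWord : ArcState → ArcState → FreeGroup (Fin 2) → Prop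
  | .A1', .A1'', w => w = genC ∨ w = genB * genC ∨ w = genB
  | .A1', .A2', w => w = genB * genC⁻¹
  | .A1', .A2'', w => w = 1 ∨ w = genB
  | .A1'', .A1', w => w = genC⁻¹ ∨ w = genB⁻¹ ∨ w = genC⁻¹ * genB⁻¹
  | .A1'', .A2', w => w = 1 ∨ w = genC⁻¹
  | .A1'', .A2'', w => w = genC⁻¹ * genB
  | .A2', .A1', w => w = genC * genB⁻¹
  | .A2', .A1'', w => w = 1 ∨ w = genC
  | .A2', .A2'', w => w = genC ∨ w = genB ∨ w = genC * genB
  | .A2'', .A1', w => w = 1 ∨ w = genB⁻¹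
  | .A2'', .A1'', w => w = genB⁻¹ * genC
  | .A2'', .A2', w => w = genC⁻¹ ∨ w = genB⁻¹ * genC⁻¹ ∨ w = genB⁻¹
  | _, _, _ => False

namespace FreeGroup

variable {α : Type*} [DecidableEq α]

def headSign (x : FreeGroup α) : Option Bool := x.toWord.head?.map Prod.snd

def lastSign (x : FreeGroup α) : Option Bool := x.toWord.getLast?.map Prod.snd

theorem toWord_mul_of_lastSign_headSign {x y : FreeGroup α}
    (h : ∀ σ ∈ x.lastSign, ∀ τ ∈ y.headSign, σ = τ) :
    (x * y).toWord = x.toWord ++ y.toWord := by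
  rw [toWord_mul]
  refine IsReduced.reduce_eq (List.IsChain.append isReduced_toWord isReduced_toWord ?_)
  intro a ha b hb _
  exact h a.2 (Option.mem_map_of_mem _ ha) b.2 (Option.mem_map_of_mem _ hb)

theorem lastSign_mul_of_lastSign_headSign {x y : FreeGroup α}
    (h : ∀ σ ∈ x.lastSign, ∀ τ ∈ y.headSign, σ = τ) :
    (x * y).lastSign = y.lastSign.or x.lastSign := by
  simp only [lastSign, toWord_mul_of_lastSign_headSign h, List.getLast?_append, Option.map_or]

end FreeGroup

open FreeGroup

def ArcState.sign : ArcState → Bool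
  | .A1' | .A2' => true
  | .A1'' | .A2'' => false

theorem ArcState.sign_swap (t : ArcState) : t.swap.sign = !t.sign := by
  cases t <;> rfl

-- For `v = 1` the second conjunct reads `t.sign = !u.sign`.
theorem TableWord.headSign_lastSign {t u : ArcState} {v : FreeGroup (Fin 2)}
    (h : TableWord t u v) :
    (∀ τ ∈ v.headSign, τ = t.sign) ∧ v.lastSign.or (some t.sign) = some (!u.sign) := by
  cases t <;> cases u <;> simp only [TableWord] at h <;> try exact h.elim
  all_goals rcases h with rfl | rfl | rfl <;> decide

theorem TableWord.toWord_mul {t u : ArcState} {g v : FreeGroup (Fin 2)} (h : TableWord t u v)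
    (hg : g.lastSign = some t.sign) :
    (g * v).toWord = g.toWord ++ v.toWord ∧ (g * v).lastSign = some (!u.sign) := by
  have hsign : ∀ σ ∈ g.lastSign, ∀ τ ∈ v.headSign, σ = τ := by
    rw [hg]
    rintro σ ⟨⟩ τ hτ
    exact (h.headSign_lastSign.1 τ hτ).symm
  refine ⟨toWord_mul_of_lastSign_headSign hsign, ?_⟩
  rw [lastSign_mul_of_lastSign_headSign hsign, hg]
  exact h.headSign_lastSign.2

theorem TableWord.isPrefix_toWord_partialProd {n : ℕ} {s e : Fin (n + 1) → ArcState}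
    {w : Fin (n + 1) → FreeGroup (Fin 2)}
    (htable : ∀ i : Fin n, TableWord (s i.succ) (e i.succ) (w i.succ))
    (hmatch : ∀ i : Fin n, s i.succ = (e i.castSucc).swap)
    (h0 : (w 0).lastSign = some (!(e 0).sign)) (i : Fin (n + 1)) :
    (w 0).toWord <+: (Fin.partialProd w i.succ).toWord ∧
      (Fin.partialProd w i.succ).lastSign = some (!(e i).sign) := by
  induction i using Fin.induction with
  | zero =>
    rw [Fin.partialProd_succ, Fin.castSucc_zero, Fin.partialProd_zero, one_mul]
    exact ⟨List.prefix_refl _, h0⟩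
  | succ i ih =>
    have hg : (Fin.partialProd w i.castSucc.succ).lastSign = some (s i.succ).sign := by
      rw [ih.2, hmatch, ArcState.sign_swap]
    obtain ⟨happend, hlast⟩ := (htable i).toWord_mul hg
    rw [Fin.partialProd_succ, ← Fin.succ_castSucc]
    exact ⟨ih.1.trans (happend ▸ List.prefix_append _ _), hlast⟩

theorem stmt_8_general (p : ℕ) (hp : 0 < p)
    (s e : Fin p → ArcState) (w : Fin p → FreeGroup (Fin 2))
    (htable : ∀ i, TableWord (s i) (e i) (w i))
    (hmatch : ∀ i : Fin p, s ⟨(i.val + 1) % p, Nat.mod_lt _ hp⟩ = (e i).swap)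
    (he0 : e ⟨0, hp⟩ = ArcState.A2')
    (hw0 : w ⟨0, hp⟩ = genB * genC⁻¹) :
    2 ≤ ((List.ofFn w).prod).toWord.length ∧ (List.ofFn w).prod ≠ 1 := by
  obtain ⟨n, rfl⟩ : ∃ n, p = n + 1 := ⟨p - 1, by omega⟩
  have hzero : (⟨0, hp⟩ : Fin (n + 1)) = 0 := rfl
  rw [hzero] at he0 hw0
  have hmatch' (i : Fin n) : s i.succ = (e i.castSucc).swap := by
    rw [← hmatch i.castSucc]
    congr 1
    ext
    simp [Nat.mod_eq_of_lt (Nat.succ_lt_succ i.isLt)]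
  have hprod : (List.ofFn w).prod = Fin.partialProd w (Fin.last n).succ := by
    rw [Fin.partialProd, Fin.val_succ, Fin.val_last, List.take_of_length_le (by simp)]
  have hprefix := (TableWord.isPrefix_toWord_partialProd (fun i => htable i.succ) hmatch'
    (by rw [hw0, he0]; decide) (Fin.last n)).1
  rw [← hprod, hw0] at hprefix
  have hlen : 2 ≤ ((List.ofFn w).prod).toWord.length := hprefix.length_le
  exact ⟨hlen, fun h => by rw [h, toWord_one] at hlen; simp at hlen⟩

/-- Proposition 3.9 induction: any admissible cyclic sequence of labeled
words from Table 5 beginning with the word `b · c⁻¹` from `A₁'` to `A₂'`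
has a product of reduced length at least `2`; in particular it is not the
identity in `F(b, c)`. -/
theorem stmt_8 (p : ℕ) (hp : 0 < p)
    (s e : Fin p → ArcState) (w : Fin p → FreeGroup (Fin 2))
    (htable : ∀ i, TableWord (s i) (e i) (w i))
    (hmatch : ∀ i : Fin p, s ⟨(i.val + 1) % p, Nat.mod_lt _ hp⟩ = (e i).swap)
    (hs0 : s ⟨0, hp⟩ = ArcState.A1')
    (he0 : e ⟨0, hp⟩ = ArcState.A2')
    (hw0 : w ⟨0, hp⟩ = genB * genC⁻¹) :
    2 ≤ ((List.ofFn w).prod).toWord.length ∧ (List.ofFn w).prod ≠ 1 :=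
  stmt_8_general p hp s e w htable hmatch he0 hw0
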